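/- arXiv:2202.04294 — 2 statements merged into one kernel-verified Lean document; each statement's English description precedes it below -/
import Mathlib

section
/- Let Δ := min_{k≠k'} ‖μ(k) − μ(k')‖ > 0 for distinct centers μ(1),…,μ(K) ∈ ℝ^d, and let ε := max_m ‖x_m − μ(c_m)‖ < Δ/4 for points x_m with labels c_m. Suppose k̄ centers x_{m_1},…,x_{m_{k̄}} have been chosen from k̄ distinct true clusters. Then any point x_{m'} whose true cluster equals that of some chosen center satisfies min_{j ≤ k̄} ‖x_{m'} − x_{m_j}‖ ≤ 2ε, while any point whose true cluster differs from all chosen centers satisfies min_{j ≤ k̄} ‖x_{m'} − x_{m_j}‖ ≥ Δ − 2ε > 2ε; hence the farthest-point (Maximin) rule selects its next center from a new cluster. -/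
/-! Each point lies within `ε` of its true center. Two points of the same cluster are therefore
at distance at most `2ε`, and two points of different clusters at distance at least `Δ - 2ε`,
by the triangle inequality through the centers. Since `4ε < Δ` these two ranges are separated,
so a point of an unrepresented cluster, whose distance to the chosen centers is at least
`Δ - 2ε`, beats every point of a represented cluster, whose distance is at most `2ε`. -/

section Maximin

variable {α β ι κ : Type*} [PseudoMetricSpace α]

lemma dist_le_two_mul_of_dist_le {a x y : α} {ε : ℝ} (hx : dist x a ≤ ε) (hy : dist y a ≤ ε) :
    dist x y ≤ 2 * ε := by
  linarith [dist_triangle_right x y a]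

lemma sub_two_mul_le_dist {a b x y : α} {Δ ε : ℝ} (hab : Δ ≤ dist a b) (hx : dist x a ≤ ε)
    (hy : dist y b ≤ ε) : Δ - 2 * ε ≤ dist x y := by
  linarith [dist_triangle4 a x y b, dist_comm a x]

lemma iInf_dist_le_dist (x : α) (z : ι → α) (j : ι) : ⨅ i, dist x (z i) ≤ dist x (z j) :=
  ciInf_le ⟨0, by rintro _ ⟨i, rfl⟩; exact dist_nonneg⟩ j

variable {μ : κ → α} {p : β → α} {c : β → κ} {ε : ℝ}

lemma iInf_dist_le_two_mul_of_label_eq (hp : ∀ m, dist (p m) (μ (c m)) ≤ ε) (ms : ι → β)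
    {m : β} {j : ι} (hj : c m = c (ms j)) : ⨅ i, dist (p m) (p (ms i)) ≤ 2 * ε :=
  (iInf_dist_le_dist _ _ j).trans <|
    dist_le_two_mul_of_dist_le (hj ▸ hp m) (hp (ms j))

lemma sub_two_mul_le_iInf_dist_of_label_ne [Nonempty ι] {Δ : ℝ}
    (hμ : ∀ k k', k ≠ k' → Δ ≤ dist (μ k) (μ k')) (hp : ∀ m, dist (p m) (μ (c m)) ≤ ε)
    (ms : ι → β) {m : β} (hm : ∀ j, c m ≠ c (ms j)) :
    Δ - 2 * ε ≤ ⨅ i, dist (p m) (p (ms i)) :=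
  le_ciInf fun j => sub_two_mul_le_dist (hμ _ _ (hm j)) (hp m) (hp (ms j))

lemma label_ne_of_maximin [Nonempty ι] {Δ : ℝ}
    (hμ : ∀ k k', k ≠ k' → Δ ≤ dist (μ k) (μ k')) (hp : ∀ m, dist (p m) (μ (c m)) ≤ ε)
    (hε : 4 * ε < Δ) (ms : ι → β) {mstar : β}
    (hmax : ∀ m, ⨅ i, dist (p m) (p (ms i)) ≤ ⨅ i, dist (p mstar) (p (ms i)))
    (hnew : ∃ m₀, ∀ j, c m₀ ≠ c (ms j)) (j : ι) : c mstar ≠ c (ms j) := by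
  intro hj
  obtain ⟨m₀, hm₀⟩ := hnew
  linarith [iInf_dist_le_two_mul_of_label_eq hp ms hj,
    sub_two_mul_le_iInf_dist_of_label_ne hμ hp ms hm₀, hmax m₀]

end Maximin

theorem stmt_16_general (K M d : ℕ) (kb : ℕ) (hkb : 0 < kb)
    (μ : Fin K → EuclideanSpace ℝ (Fin d))
    (Δ ε : ℝ) (hΔ : ∀ k k', k ≠ k' → Δ ≤ ‖μ k - μ k'‖)
    (x : Fin M → EuclideanSpace ℝ (Fin d)) (c : Fin M → Fin K)
    (hx : ∀ m, ‖x m - μ (c m)‖ ≤ ε) (hε : 4 * ε < Δ)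
    (ms : Fin kb → Fin M)
    (mstar : Fin M)
    (hmax : ∀ m'' : Fin M,
      (⨅ j : Fin kb, ‖x m'' - x (ms j)‖) ≤ ⨅ j : Fin kb, ‖x mstar - x (ms j)‖)
    (hnew : ∃ m₀ : Fin M, ∀ j, c m₀ ≠ c (ms j)) :
    (∀ m' : Fin M, (∃ j, c m' = c (ms j)) →
        (⨅ j : Fin kb, ‖x m' - x (ms j)‖) ≤ 2 * ε) ∧
    (∀ m' : Fin M, (∀ j, c m' ≠ c (ms j)) →
        Δ - 2 * ε ≤ ⨅ j : Fin kb, ‖x m' - x (ms j)‖) ∧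
    (2 * ε < Δ - 2 * ε) ∧
    (∀ j, c mstar ≠ c (ms j)) := by
  have : Nonempty (Fin kb) := ⟨⟨0, hkb⟩⟩
  simp only [← dist_eq_norm] at hΔ hx hmax ⊢
  exact ⟨fun m' ⟨_, hj⟩ => iInf_dist_le_two_mul_of_label_eq hx ms hj,
    fun m' => sub_two_mul_le_iInf_dist_of_label_ne hΔ hx ms, by linarith,
    label_ne_of_maximin hΔ hx hε ms hmax hnew⟩

theorem stmt_16 (K M d : ℕ) (kb : ℕ) (hkb : 0 < kb) (hkbK : kb < K)
    (μ : Fin K → EuclideanSpace ℝ (Fin d)) (hμ : Function.Injective μ)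
    (Δ ε : ℝ) (hΔ : ∀ k k', k ≠ k' → Δ ≤ ‖μ k - μ k'‖)
    (x : Fin M → EuclideanSpace ℝ (Fin d)) (c : Fin M → Fin K)
    (hx : ∀ m, ‖x m - μ (c m)‖ ≤ ε) (hε : 4 * ε < Δ)
    (ms : Fin kb → Fin M) (hms : Function.Injective (fun j => c (ms j)))
    (mstar : Fin M)
    (hmax : ∀ m'' : Fin M,
      (⨅ j : Fin kb, ‖x m'' - x (ms j)‖) ≤ ⨅ j : Fin kb, ‖x mstar - x (ms j)‖)
    (hnew : ∃ m₀ : Fin M, ∀ j, c m₀ ≠ c (ms j)) :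
    (∀ m' : Fin M, (∃ j, c m' = c (ms j)) →
        (⨅ j : Fin kb, ‖x m' - x (ms j)‖) ≤ 2 * ε) ∧
    (∀ m' : Fin M, (∀ j, c m' ≠ c (ms j)) →
        Δ - 2 * ε ≤ ⨅ j : Fin kb, ‖x m' - x (ms j)‖) ∧
    (2 * ε < Δ - 2 * ε) ∧
    (∀ j, c mstar ≠ c (ms j)) :=
  stmt_16_general K M d kb hkb μ Δ ε hΔ x c hx hε ms mstar hmax hnew
end

section
/- For λ in the closed probability simplex of ℝ^M with all coordinates strictly positive, a surjective label vector c ∈ [K]^M, and centers μ(1),…,μ(K) ∈ ℝ^d, the infimum over label vectors c' at Hamming distance exactly 1 from c (with c' surjective) and arbitrary centers U' of ∑_m λ_m‖μ(c_m) − μ'(c'_m)‖² equals min over (k,k') with n(k) > 1 and k' ≠ k of (w̄(k)·w(k')/(w̄(k)+w(k'))) · ‖μ(k) − μ(k')‖², where w(k) = ∑_{m: c_m = k} λ_m, n(k) = #{m : c_m = k}, and w̄(k) = min_{m: c_m = k} λ_m. -/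
/-!
If arm `m₀` moves to cluster `k'`, every other arm keeps its own centre at no cost, while
`m₀` and cluster `k'` must share the single centre `μ'(k')`. Two points `u, v` with weights
`a, b` cost at least `a b / (a + b) ‖u - v‖²` around any common centre, with equality at their
weighted mean. This grows with `a`, so the cheapest arm to move out of a cluster is a lightest
one; surjectivity of the new labels says exactly that the old cluster had another arm.
-/

open Finset Function

section TwoPoints

variable {E : Type*}

theorem mul_div_add_mul_norm_sub_sq_le [SeminormedAddCommGroup E] {a b : ℝ}
    (ha : 0 < a) (hb : 0 < b) (u v x : E) :
    a * b / (a + b) * ‖u - v‖ ^ 2 ≤ a * ‖u - x‖ ^ 2 + b * ‖v - x‖ ^ 2 := by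
  have hsq : ‖u - v‖ ^ 2 ≤ (‖u - x‖ + ‖v - x‖) ^ 2 := by
    gcongr
    simpa only [norm_sub_rev x v] using norm_sub_le_norm_sub_add_norm_sub u x v
  rw [div_mul_eq_mul_div, div_le_iff₀ (by positivity)]
  -- `(a + b)(a s² + b t²) - a b (s + t)² = (a s - b t)²` with `s = ‖u - x‖`, `t = ‖v - x‖`
  nlinarith [sq_nonneg (a * ‖u - x‖ - b * ‖v - x‖),
    mul_le_mul_of_nonneg_left hsq (mul_pos ha hb).le]

theorem mul_norm_sub_sq_add_mul_norm_sub_sq_weightedMean [SeminormedAddCommGroup E]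
    [NormedSpace ℝ E] {a b : ℝ} (ha : 0 < a) (hb : 0 < b) (u v : E) :
    a * ‖u - (a + b)⁻¹ • (a • u + b • v)‖ ^ 2 + b * ‖v - (a + b)⁻¹ • (a • u + b • v)‖ ^ 2 =
      a * b / (a + b) * ‖u - v‖ ^ 2 := by
  have hab : a + b ≠ 0 := by positivity
  have hu : u - (a + b)⁻¹ • (a • u + b • v) = (b / (a + b)) • (u - v) := by
    match_scalars <;> field_simp; ring
  have hv : v - (a + b)⁻¹ • (a • u + b • v) = (a / (a + b)) • (v - u) := by
    match_scalars <;> field_simp; ring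
  rw [hu, hv, norm_smul, norm_smul, norm_sub_rev v u, Real.norm_of_nonneg (by positivity),
    Real.norm_of_nonneg (by positivity)]
  field_simp
  ring

end TwoPoints

theorem mul_div_add_le_mul_div_add {a a' b : ℝ} (ha : 0 < a) (haa' : a ≤ a') (hb : 0 ≤ b) :
    a * b / (a + b) ≤ a' * b / (a' + b) := by
  rw [div_le_div_iff₀ (by linarith) (by linarith)]
  nlinarith [mul_le_mul_of_nonneg_right haa' (sq_nonneg b)]

section Reassignment

variable {ι κ E : Type*}

def clusterWeight [Fintype ι] [DecidableEq κ] (lam : ι → ℝ) (c : ι → κ) (k : κ) : ℝ :=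
  ∑ m ∈ univ.filter (fun m => c m = k), lam m

noncomputable def clusterMinWeight (lam : ι → ℝ) (c : ι → κ) (k : κ) : ℝ :=
  sInf {v : ℝ | ∃ m, c m = k ∧ v = lam m}

def singleReassignCosts [Fintype ι] [DecidableEq κ] [SeminormedAddCommGroup E]
    (lam : ι → ℝ) (c : ι → κ) (μ : κ → E) : Set ℝ :=
  {v | ∃ (c' : ι → κ) (μ' : κ → E), Surjective c' ∧
    #(univ.filter fun m => c' m ≠ c m) = 1 ∧ v = ∑ m, lam m * ‖μ (c m) - μ' (c' m)‖ ^ 2}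

def reassignPairs [Fintype ι] [Fintype κ] [DecidableEq κ] (c : ι → κ) : Finset (κ × κ) :=
  univ.filter fun p => 1 < #(univ.filter fun m => c m = p.1) ∧ p.2 ≠ p.1

noncomputable def reassignBound [Fintype ι] [DecidableEq κ] [SeminormedAddCommGroup E]
    (lam : ι → ℝ) (c : ι → κ) (μ : κ → E) (p : κ × κ) : ℝ :=
  clusterMinWeight lam c p.1 * clusterWeight lam c p.2 /
    (clusterMinWeight lam c p.1 + clusterWeight lam c p.2) * ‖μ p.1 - μ p.2‖ ^ 2

theorem clusterWeight_pos [Fintype ι] [DecidableEq κ] {lam : ι → ℝ} {c : ι → κ} {k : κ}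
    (hlam : ∀ m, 0 < lam m) (hk : ∃ m, c m = k) : 0 < clusterWeight lam c k := by
  obtain ⟨m, hm⟩ := hk
  exact sum_pos (fun m _ => hlam m) ⟨m, mem_filter.2 ⟨mem_univ m, hm⟩⟩

theorem finite_clusterWeights [Finite ι] (lam : ι → ℝ) (c : ι → κ) (k : κ) :
    {v : ℝ | ∃ m, c m = k ∧ v = lam m}.Finite :=
  (Set.finite_range lam).subset (by rintro _ ⟨m, -, rfl⟩; exact ⟨m, rfl⟩)

theorem exists_clusterMinWeight_eq [Finite ι] (lam : ι → ℝ) {c : ι → κ} {k : κ}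
    (hk : ∃ m, c m = k) : ∃ m, c m = k ∧ clusterMinWeight lam c k = lam m :=
  let ⟨m, hm⟩ := hk
  Set.Nonempty.csInf_mem (s := {v : ℝ | ∃ m, c m = k ∧ v = lam m}) ⟨lam m, m, hm, rfl⟩
    (finite_clusterWeights lam c k)

theorem clusterMinWeight_le [Finite ι] (lam : ι → ℝ) {c : ι → κ} {m : ι} :
    clusterMinWeight lam c (c m) ≤ lam m :=
  csInf_le (finite_clusterWeights lam c (c m)).bddBelow (by exact ⟨m, rfl, rfl⟩)

theorem clusterMinWeight_pos [Finite ι] {lam : ι → ℝ} {c : ι → κ} {k : κ}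
    (hlam : ∀ m, 0 < lam m) (hk : ∃ m, c m = k) : 0 < clusterMinWeight lam c k := by
  obtain ⟨m, -, hm⟩ := exists_clusterMinWeight_eq lam hk
  exact hm ▸ hlam m

theorem card_filter_ne_eq_one_iff [Fintype ι] [DecidableEq ι] [DecidableEq κ]
    {c c' : ι → κ} :
    #(univ.filter fun m => c' m ≠ c m) = 1 ↔ ∃ m₀ k, k ≠ c m₀ ∧ c' = update c m₀ k := by
  rw [card_eq_one]
  constructor
  · rintro ⟨m₀, hm₀⟩
    have hchanged : ∀ m, c' m ≠ c m ↔ m = m₀ := fun m => by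
      simpa only [mem_filter, mem_univ, true_and, mem_singleton] using Finset.ext_iff.1 hm₀ m
    refine ⟨m₀, c' m₀, (hchanged m₀).2 rfl, funext fun m => ?_⟩
    rcases eq_or_ne m m₀ with rfl | hm
    · rw [update_self]
    · rw [update_of_ne hm]
      exact not_not.1 (mt (hchanged m).1 hm)
  · rintro ⟨m₀, k, hk, rfl⟩
    refine ⟨m₀, ext fun m => ?_⟩
    rcases eq_or_ne m m₀ with rfl | hm <;> simp [*]

theorem surjective_update_iff [Fintype ι] [DecidableEq ι] [DecidableEq κ] {c : ι → κ}
    (hc : Surjective c) {m₀ : ι} {k : κ} (hk : k ≠ c m₀) :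
    Surjective (update c m₀ k) ↔ 1 < #(univ.filter fun m => c m = c m₀) := by
  constructor
  · intro h
    obtain ⟨m₁, hm₁⟩ := h (c m₀)
    have hne : m₁ ≠ m₀ := by rintro rfl; exact hk (by rwa [update_self] at hm₁)
    rw [update_of_ne hne] at hm₁
    exact one_lt_card.2 ⟨m₀, by simp, m₁, by simp [hm₁], hne.symm⟩
  · intro h j
    rcases eq_or_ne j (c m₀) with rfl | hj
    · obtain ⟨x, hx, y, hy, hxy⟩ := one_lt_card.1 h
      simp only [mem_filter, mem_univ, true_and] at hx hy
      rcases eq_or_ne x m₀ with rfl | hxm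
      · exact ⟨y, by rw [update_of_ne (Ne.symm hxy), hy]⟩
      · exact ⟨x, by rw [update_of_ne hxm, hx]⟩
    · obtain ⟨m, rfl⟩ := hc j
      exact ⟨m, update_of_ne (fun h => hj (congrArg c h)) _ _⟩

section Cost

variable [Fintype ι] [DecidableEq ι] [DecidableEq κ] [SeminormedAddCommGroup E]
  {lam : ι → ℝ} {c : ι → κ} {m₀ : ι} {k : κ}

theorem sum_insert_fiber_update (μ μ' : κ → E) (hk : k ≠ c m₀) :
    ∑ m ∈ insert m₀ (univ.filter fun m => c m = k),
        lam m * ‖μ (c m) - μ' (update c m₀ k m)‖ ^ 2 =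
      lam m₀ * ‖μ (c m₀) - μ' k‖ ^ 2 + clusterWeight lam c k * ‖μ k - μ' k‖ ^ 2 := by
  have hm₀ : m₀ ∉ univ.filter fun m => c m = k := by simpa using hk.symm
  rw [sum_insert hm₀, update_self, clusterWeight, sum_mul]
  congr 1
  refine sum_congr rfl fun m hm => ?_
  have hcm : c m = k := (mem_filter.1 hm).2
  rw [update_of_ne (by rintro rfl; exact hm₀ hm), hcm]

theorem le_sum_update (hlam : ∀ m, 0 ≤ lam m) (μ μ' : κ → E) (hk : k ≠ c m₀) :
    lam m₀ * ‖μ (c m₀) - μ' k‖ ^ 2 + clusterWeight lam c k * ‖μ k - μ' k‖ ^ 2 ≤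
      ∑ m, lam m * ‖μ (c m) - μ' (update c m₀ k m)‖ ^ 2 := by
  rw [← sum_insert_fiber_update μ μ' hk]
  exact sum_le_sum_of_subset_of_nonneg (subset_univ _)
    fun m _ _ => mul_nonneg (hlam m) (sq_nonneg _)

theorem sum_update_update (μ : κ → E) (z : E) (hk : k ≠ c m₀) :
    ∑ m, lam m * ‖μ (c m) - update μ k z (update c m₀ k m)‖ ^ 2 =
      lam m₀ * ‖μ (c m₀) - z‖ ^ 2 + clusterWeight lam c k * ‖μ k - z‖ ^ 2 := by
  have hzero : ∀ m ∉ insert m₀ (univ.filter fun m => c m = k),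
      lam m * ‖μ (c m) - update μ k z (update c m₀ k m)‖ ^ 2 = 0 := fun m hm => by
    simp only [mem_insert, mem_filter, mem_univ, true_and, not_or] at hm
    rw [update_of_ne hm.1, update_of_ne hm.2, sub_self, norm_zero]
    ring
  rw [← sum_subset (subset_univ _) fun m _ hm => hzero m hm, sum_insert_fiber_update μ _ hk,
    update_self]

end Cost

variable [Fintype ι] [DecidableEq ι] [Fintype κ] [DecidableEq κ] [SeminormedAddCommGroup E]
  {lam : ι → ℝ} {c : ι → κ} {μ : κ → E}

theorem inf'_reassignBound_le (hlam : ∀ m, 0 < lam m) (hc : Surjective c)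
    (hP : (reassignPairs c).Nonempty) {v : ℝ} (hv : v ∈ singleReassignCosts lam c μ) :
    (reassignPairs c).inf' hP (reassignBound lam c μ) ≤ v := by
  obtain ⟨c', μ', hsurj, hcard, rfl⟩ := hv
  obtain ⟨m₀, k, hk, rfl⟩ := card_filter_ne_eq_one_iff.1 hcard
  have hpair : (c m₀, k) ∈ reassignPairs c :=
    mem_filter.2 ⟨mem_univ _, (surjective_update_iff hc hk).1 hsurj, hk⟩
  have hw := clusterWeight_pos hlam (hc k)
  calc (reassignPairs c).inf' hP (reassignBound lam c μ)
      ≤ reassignBound lam c μ (c m₀, k) := inf'_le _ hpair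
    _ ≤ lam m₀ * clusterWeight lam c k / (lam m₀ + clusterWeight lam c k) *
          ‖μ (c m₀) - μ k‖ ^ 2 :=
        mul_le_mul_of_nonneg_right (mul_div_add_le_mul_div_add
          (clusterMinWeight_pos hlam ⟨m₀, rfl⟩) (clusterMinWeight_le lam) hw.le) (sq_nonneg _)
    _ ≤ lam m₀ * ‖μ (c m₀) - μ' k‖ ^ 2 + clusterWeight lam c k * ‖μ k - μ' k‖ ^ 2 :=
        mul_div_add_mul_norm_sub_sq_le (hlam m₀) hw _ _ _
    _ ≤ _ := le_sum_update (fun m => (hlam m).le) μ μ' hk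

theorem inf'_reassignBound_mem [NormedSpace ℝ E] (hlam : ∀ m, 0 < lam m) (hc : Surjective c)
    (hP : (reassignPairs c).Nonempty) :
    (reassignPairs c).inf' hP (reassignBound lam c μ) ∈ singleReassignCosts lam c μ := by
  obtain ⟨⟨k, k'⟩, hp, hmin⟩ := exists_mem_eq_inf' hP (reassignBound lam c μ)
  obtain ⟨hcard, hk' : k' ≠ k⟩ := (mem_filter.1 hp).2
  obtain ⟨m, hm⟩ := card_pos.1 (zero_lt_one.trans hcard)
  obtain ⟨m₀, rfl, hm₀⟩ := exists_clusterMinWeight_eq lam ⟨m, (mem_filter.1 hm).2⟩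
  set w := clusterWeight lam c k'
  refine ⟨update c m₀ k', update μ k' ((lam m₀ + w)⁻¹ • (lam m₀ • μ (c m₀) + w • μ k')),
    (surjective_update_iff hc hk').2 hcard, card_filter_ne_eq_one_iff.2 ⟨m₀, k', hk', rfl⟩, ?_⟩
  rw [hmin, sum_update_update (lam := lam) μ _ hk',
    mul_norm_sub_sq_add_mul_norm_sub_sq_weightedMean (hlam m₀) (clusterWeight_pos hlam (hc k')),
    reassignBound, hm₀]

theorem isLeast_singleReassignCosts [NormedSpace ℝ E] (hlam : ∀ m, 0 < lam m)
    (hc : Surjective c) (hP : (reassignPairs c).Nonempty) :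
    IsLeast (singleReassignCosts lam c μ) ((reassignPairs c).inf' hP (reassignBound lam c μ)) :=
  ⟨inf'_reassignBound_mem hlam hc hP, fun _ hv => inf'_reassignBound_le hlam hc hP hv⟩

end Reassignment

theorem stmt_17_general (M K d : ℕ)
    (lam : Fin M → ℝ) (hlam : ∀ m, 0 < lam m)
    (c : Fin M → Fin K) (hc : Function.Surjective c)
    (μ : Fin K → EuclideanSpace ℝ (Fin d))
    (hP : (Finset.univ.filter (fun p : Fin K × Fin K =>
        1 < (Finset.univ.filter (fun m => c m = p.1)).card ∧ p.2 ≠ p.1)).Nonempty) :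
    sInf {v : ℝ | ∃ (c' : Fin M → Fin K) (μ' : Fin K → EuclideanSpace ℝ (Fin d)),
        Function.Surjective c' ∧
        (Finset.univ.filter (fun m => c' m ≠ c m)).card = 1 ∧
        v = ∑ m, lam m * ‖μ (c m) - μ' (c' m)‖ ^ 2} =
      (Finset.univ.filter (fun p : Fin K × Fin K =>
          1 < (Finset.univ.filter (fun m => c m = p.1)).card ∧ p.2 ≠ p.1)).inf' hP
        (fun p =>
          (sInf {v : ℝ | ∃ m, c m = p.1 ∧ v = lam m} *
              (∑ m ∈ Finset.univ.filter (fun m => c m = p.2), lam m) /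
            (sInf {v : ℝ | ∃ m, c m = p.1 ∧ v = lam m} +
              ∑ m ∈ Finset.univ.filter (fun m => c m = p.2), lam m)) *
          ‖μ p.1 - μ p.2‖ ^ 2) :=
  (isLeast_singleReassignCosts (μ := μ) hlam hc hP).csInf_eq

theorem stmt_17 (M K d : ℕ) (hK : 2 ≤ K) (hM : K < M)
    (lam : Fin M → ℝ) (hlam : ∀ m, 0 < lam m) (hsum : ∑ m, lam m = 1)
    (c : Fin M → Fin K) (hc : Function.Surjective c)
    (μ : Fin K → EuclideanSpace ℝ (Fin d))
    (hP : (Finset.univ.filter (fun p : Fin K × Fin K =>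
        1 < (Finset.univ.filter (fun m => c m = p.1)).card ∧ p.2 ≠ p.1)).Nonempty) :
    sInf {v : ℝ | ∃ (c' : Fin M → Fin K) (μ' : Fin K → EuclideanSpace ℝ (Fin d)),
        Function.Surjective c' ∧
        (Finset.univ.filter (fun m => c' m ≠ c m)).card = 1 ∧
        v = ∑ m, lam m * ‖μ (c m) - μ' (c' m)‖ ^ 2} =
      (Finset.univ.filter (fun p : Fin K × Fin K =>
          1 < (Finset.univ.filter (fun m => c m = p.1)).card ∧ p.2 ≠ p.1)).inf' hP
        (fun p =>
          (sInf {v : ℝ | ∃ m, c m = p.1 ∧ v = lam m} *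
              (∑ m ∈ Finset.univ.filter (fun m => c m = p.2), lam m) /
            (sInf {v : ℝ | ∃ m, c m = p.1 ∧ v = lam m} +
              ∑ m ∈ Finset.univ.filter (fun m => c m = p.2), lam m)) *
          ‖μ p.1 - μ p.2‖ ^ 2) :=
  stmt_17_general M K d lam hlam c hc μ hP
end
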